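/- arXiv:math/0509678 — 3 statements merged into one kernel-verified Lean document; each statement's English description precedes it below -/
import Mathlib

section
/- Every bijection π of the set IS_n satisfying π(a) ∼ a for all a ∈ IS_n is a semigroup automorphism of (IS_n, *); these bijections form a subgroup of Aut(IS_n, *). -/
open Equiv

/-- `IS n` : the symmetric inverse semigroup on `{1,…,n}`, modeled as partial
equivalences of `Fin n`.  Composition is left-to-right: `(x.trans y) t = y (x t)`. -/
abbrev IS (n : ℕ) := PEquiv (Fin n) (Fin n)

/-- The domain of a partial injective transformation. -/
def sdom {n : ℕ} (x : IS n) : Set (Fin n) := {a | (x a).isSome}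

/-- The image of a partial injective transformation. -/
def sim {n : ℕ} (x : IS n) : Set (Fin n) := {b | (x.symm b).isSome}

/-- The rank of a partial injective transformation: the cardinality of its image. -/
noncomputable def srank {n : ℕ} (x : IS n) : ℕ := Nat.card (sim x)

/-- The set `A = {1,…,k}` inside `Fin n`, i.e. the first `k` elements. -/
def SetA (n k : ℕ) : Set (Fin n) := {i | (i : ℕ) < k}

/-- The idempotent `e` acting identically on `A`, with `dom e = im e = A`. -/
def sandE (n k : ℕ) : IS n where
  toFun i := if (i : ℕ) < k then some i else none
  invFun i := if (i : ℕ) < k then some i else none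
  inv a b := by
    try dsimp only
    split_ifs with h1 h2 <;>
      simp_all [Option.mem_def, eq_comm] <;> rintro rfl <;> omega

/-- The sandwich multiplication `x * y = x e y` (left-to-right composition). -/
def smul (n k : ℕ) (x y : IS n) : IS n := (x.trans (sandE n k)).trans y

/-- `a` is decomposable in `(IS_n, *)` if `a = b * c` for some `b, c`. -/
def Decomp (n k : ℕ) (a : IS n) : Prop := ∃ b c : IS n, smul n k b c = a

/-- `M₁(a) = {x ∈ dom a : x ∈ A, a x ∈ A}`. -/
def M1 (n k : ℕ) (a : IS n) : Set (Fin n) :=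
  {x | x ∈ SetA n k ∧ ∃ y ∈ SetA n k, a x = some y}

/-- `M₂(a) = {x ∈ dom a : x ∈ A, a x ∈ Ā}`. -/
def M2 (n k : ℕ) (a : IS n) : Set (Fin n) :=
  {x | x ∈ SetA n k ∧ ∃ y, y ∉ SetA n k ∧ a x = some y}

/-- `M₃(a) = {x ∈ dom a : x ∈ Ā, a x ∈ A}`. -/
def M3 (n k : ℕ) (a : IS n) : Set (Fin n) :=
  {x | x ∉ SetA n k ∧ ∃ y ∈ SetA n k, a x = some y}

/-- The relation `∼` : for indecomposable `a, b`, `a ∼ b` iff `Mᵢ(a) = Mᵢ(b)` for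
`i = 1,2,3` and `a x = b x` on `M₁(a) ∪ M₂(a) ∪ M₃(a)`; if `a` or `b` is
decomposable, `a ∼ b` iff `a = b`. -/
def SimRel (n k : ℕ) (a b : IS n) : Prop :=
  (¬ Decomp n k a ∧ ¬ Decomp n k b ∧ M1 n k a = M1 n k b ∧ M2 n k a = M2 n k b ∧
    M3 n k a = M3 n k b ∧ ∀ x ∈ M1 n k a ∪ M2 n k a ∪ M3 n k a, a x = b x)
  ∨ ((Decomp n k a ∨ Decomp n k b) ∧ a = b)

/-! Decomposable elements are fixed by such a `π`, being `∼`-related only to themselves. On the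
other hand `a ↦ a e` and `a ↦ e a` only see the values of `a` on `M₁(a) ∪ M₃(a)` and on
`M₁(a) ∪ M₂(a)` respectively, so they are constant on `∼`-classes. Hence
`π (x * y) = x e y = (π x) e (π y)`. -/

section SandwichSemigroup

variable {n k : ℕ}

lemma trans_sandE_apply_eq_some {x : IS n} {t y : Fin n} :
    (x.trans (sandE n k)) t = some y ↔ x t = some y ∧ y ∈ SetA n k := by
  rw [← Option.mem_def, PEquiv.mem_trans]
  simp [sandE, SetA]

lemma sandE_trans_apply_eq_some {x : IS n} {t y : Fin n} :
    ((sandE n k).trans x) t = some y ↔ t ∈ SetA n k ∧ x t = some y := by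
  rw [← Option.mem_def, PEquiv.mem_trans]
  simp [sandE, SetA]

lemma mem_M1_union_M3 {x : IS n} {t : Fin n} :
    t ∈ M1 n k x ∪ M3 n k x ↔ ∃ y ∈ SetA n k, x t = some y := by
  by_cases ht : t ∈ SetA n k <;> simp [M1, M3, ht]

lemma mem_M1_union_M2 {x : IS n} {t : Fin n} :
    t ∈ M1 n k x ∪ M2 n k x ↔ t ∈ SetA n k ∧ ∃ y, x t = some y := by
  by_cases ht : t ∈ SetA n k <;> simp [M1, M2, ht, ← exists_or, ← or_and_right, em]

lemma trans_sandE_eq_of_eqOn {a b : IS n} (h1 : M1 n k a = M1 n k b)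
    (h3 : M3 n k a = M3 n k b) (hab : Set.EqOn a b (M1 n k a ∪ M3 n k a)) :
    a.trans (sandE n k) = b.trans (sandE n k) := by
  refine PEquiv.ext fun t => Option.ext fun y => ?_
  simp only [trans_sandE_apply_eq_some]
  constructor
  · rintro ⟨ha, hy⟩
    rwa [← hab (mem_M1_union_M3.2 ⟨y, hy, ha⟩), and_iff_left hy]
  · rintro ⟨hb, hy⟩
    have ht : t ∈ M1 n k a ∪ M3 n k a := h1 ▸ h3 ▸ mem_M1_union_M3.2 ⟨y, hy, hb⟩
    rwa [hab ht, and_iff_left hy]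

lemma sandE_trans_eq_of_eqOn {a b : IS n} (h1 : M1 n k a = M1 n k b)
    (h2 : M2 n k a = M2 n k b) (hab : Set.EqOn a b (M1 n k a ∪ M2 n k a)) :
    (sandE n k).trans a = (sandE n k).trans b := by
  refine PEquiv.ext fun t => Option.ext fun y => ?_
  simp only [sandE_trans_apply_eq_some]
  constructor
  · rintro ⟨ht, ha⟩
    rwa [← hab (mem_M1_union_M2.2 ⟨ht, y, ha⟩), and_iff_right ht]
  · rintro ⟨ht, hb⟩
    have hta : t ∈ M1 n k a ∪ M2 n k a := h1 ▸ h2 ▸ mem_M1_union_M2.2 ⟨ht, y, hb⟩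
    rwa [hab hta, and_iff_right ht]

namespace SimRel

lemma eq_of_decomp {a b : IS n} (h : SimRel n k a b) (hb : Decomp n k b) : a = b := by
  rcases h with ⟨-, hnd, -⟩ | ⟨-, rfl⟩
  exacts [absurd hb hnd, rfl]

lemma m_eq_and_eqOn {a b : IS n} (h : SimRel n k a b) :
    M1 n k a = M1 n k b ∧ M2 n k a = M2 n k b ∧ M3 n k a = M3 n k b ∧
      Set.EqOn a b (M1 n k a ∪ M2 n k a ∪ M3 n k a) := by
  rcases h with ⟨-, -, h⟩ | ⟨-, rfl⟩
  exacts [h, ⟨rfl, rfl, rfl, Set.eqOn_refl _ _⟩]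

lemma smul_eq {x x' y y' : IS n} (hx : SimRel n k x x') (hy : SimRel n k y y') :
    smul n k x y = smul n k x' y' := by
  obtain ⟨hx1, -, hx3, hx⟩ := hx.m_eq_and_eqOn
  obtain ⟨hy1, hy2, -, hy⟩ := hy.m_eq_and_eqOn
  have hxe := trans_sandE_eq_of_eqOn hx1 hx3
    (hx.mono (Set.union_subset_union_left _ Set.subset_union_left))
  have hey := sandE_trans_eq_of_eqOn hy1 hy2 (hy.mono Set.subset_union_left)
  rw [smul, smul, hxe, PEquiv.trans_assoc, PEquiv.trans_assoc, hey]

end SimRel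

lemma simRel_equivalence : Equivalence (SimRel n k) where
  refl a := by
    by_cases h : Decomp n k a
    exacts [Or.inr ⟨Or.inl h, rfl⟩, Or.inl ⟨h, h, rfl, rfl, rfl, Set.eqOn_refl _ _⟩]
  symm := by
    rintro a b (⟨ha, hb, h1, h2, h3, hab⟩ | ⟨hd, rfl⟩)
    · exact Or.inl ⟨hb, ha, h1.symm, h2.symm, h3.symm, h1 ▸ h2 ▸ h3 ▸ Set.EqOn.symm hab⟩
    · exact Or.inr ⟨hd, rfl⟩
  trans := by
    rintro a b c hab (⟨hb, hc, h1, h2, h3, hbc⟩ | ⟨hd, rfl⟩)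
    · rcases hab with ⟨ha, -, g1, g2, g3, gab⟩ | ⟨hd, rfl⟩
      · refine Or.inl ⟨ha, hc, g1.trans h1, g2.trans h2, g3.trans h3, ?_⟩
        exact Set.EqOn.trans gab (g1 ▸ g2 ▸ g3 ▸ hbc)
      · exact Or.inl ⟨hb, hc, h1, h2, h3, hbc⟩
    · exact hab

def simRelPreserving (n k : ℕ) : Subgroup (Equiv.Perm (IS n)) where
  carrier := {π | ∀ a, SimRel n k (π a) a}
  mul_mem' hπ hσ a := simRel_equivalence.trans (hπ _) (hσ a)
  one_mem' := simRel_equivalence.refl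
  inv_mem' {π} hπ a := by
    simpa using simRel_equivalence.symm (hπ (π⁻¹ a))

end SandwichSemigroup

theorem simRel_preserving_subgroup_general (n k : ℕ) :
    (∀ π : Equiv.Perm (IS n), (∀ a, SimRel n k (π a) a) →
      ∀ x y : IS n, π (smul n k x y) = smul n k (π x) (π y)) ∧
    ∃ G : Subgroup (Equiv.Perm (IS n)),
      ∀ π : Equiv.Perm (IS n), π ∈ G ↔ ∀ a, SimRel n k (π a) a := by
  refine ⟨fun π hπ x y => ?_, simRelPreserving n k, fun π => Iff.rfl⟩
  rw [(hπ _).eq_of_decomp ⟨x, y, rfl⟩]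
  exact ((hπ x).smul_eq (hπ y)).symm

/-- every bijection `π` of `IS_n` with `π a ∼ a` for all `a` is an
automorphism of `(IS_n, *)`, and such bijections form a subgroup of the group of
permutations of `IS_n` (hence of `Aut(IS_n, *)`). -/
theorem simRel_preserving_subgroup (n k : ℕ) (hk : 1 ≤ k) (hkn : k ≤ n) :
    (∀ π : Equiv.Perm (IS n), (∀ a, SimRel n k (π a) a) →
      ∀ x y : IS n, π (smul n k x y) = smul n k (π x) (π y)) ∧
    ∃ G : Subgroup (Equiv.Perm (IS n)),
      ∀ π : Equiv.Perm (IS n), π ∈ G ↔ ∀ a, SimRel n k (π a) a :=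
  simRel_preserving_subgroup_general n k
end

section
/- For every triple (g, h₁, h₂) with g ∈ S(A) and h₁, h₂ ∈ S(Ā), the map τ_(g,h₁,h₂) : a ↦ (g⋈h₁)⁻¹ · a · (g⋈h₂) is a semigroup automorphism of (IS_n, *), and the map (g, h₁, h₂) ↦ τ_(g,h₁,h₂) is an injective group homomorphism from S(A) × S(Ā) × S(Ā) into Aut(IS_n, *). -/
open Equiv

/-- `g⋈h` : the permutation of `Fin n` acting as `g` on `A` and as `h` on `Ā`. -/
def bowtie {n : ℕ} (k : ℕ) (g : Perm {x : Fin n // (x : ℕ) < k})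
    (h : Perm {x : Fin n // ¬ (x : ℕ) < k}) : Perm (Fin n) :=
  Equiv.Perm.subtypeCongr g h

/-- `τ_(g,h₁,h₂) : a ↦ (g⋈h₁)⁻¹ · a · (g⋈h₂)` (ordinary, left-to-right, composition). -/
def tauMap {n : ℕ} (k : ℕ) (g : Perm {x : Fin n // (x : ℕ) < k})
    (h₁ h₂ : Perm {x : Fin n // ¬ (x : ℕ) < k}) (a : IS n) : IS n :=
  ((bowtie k g h₁).symm.toPEquiv.trans a).trans (bowtie k g h₂).toPEquiv

/-!
Write `σ = g⋈h₁` and `τ = g⋈h₂`. Both preserve `A` and act on it as `g`, so `τ · e = e · σ`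
(each is `g` on `A` and undefined off `A`); hence `σ⁻¹ x τ e σ⁻¹ y τ = σ⁻¹ (x e y) τ`.
The two-sided action `(σ, τ) ↦ (a ↦ σ⁻¹ a τ)` of `Perm N × Perm N` on `IS_n` is faithful because
it sends the partial identity `{t ↦ t}` to `{σ t ↦ τ t}`, and `(g, h₁, h₂) ↦ (g⋈h₁, g⋈h₂)` is
injective.
-/

namespace PEquiv

variable {α : Type*}

def permMul (σ τ : Perm α) (a : α ≃. α) : α ≃. α :=
  (σ.symm.toPEquiv.trans a).trans τ.toPEquiv

theorem permMul_permMul (σ τ σ' τ' : Perm α) (a : α ≃. α) :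
    permMul σ' τ' (permMul σ τ a) = permMul (σ' * σ) (τ' * τ) a := by
  simp only [permMul, Perm.mul_def, toPEquiv_trans, toPEquiv_symm,
    symm_trans_rev, trans_assoc]

theorem permMul_one (a : α ≃. α) : permMul 1 1 a = a := by
  simp [permMul, Perm.one_def, toPEquiv_refl, refl_trans, trans_refl]

theorem permMul_single [DecidableEq α] (σ τ : Perm α) (a b : α) :
    permMul σ τ (single a b) = single (σ a) (τ b) := by
  rw [permMul, trans_single_of_mem b (a := σ a) (by simp [toPEquiv_apply]),
    single_trans_of_mem _ (toPEquiv_apply τ b)]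

def permMulHom : Perm α × Perm α →* Perm (α ≃. α) where
  toFun p :=
    { toFun := permMul p.1 p.2
      invFun := permMul p.1⁻¹ p.2⁻¹
      left_inv a := by simp [permMul_permMul, permMul_one]
      right_inv a := by simp [permMul_permMul, permMul_one] }
  map_one' := Equiv.ext permMul_one
  map_mul' p q := Equiv.ext fun a => (permMul_permMul q.1 q.2 p.1 p.2 a).symm

theorem permMulHom_apply (p : Perm α × Perm α) (a : α ≃. α) :
    permMulHom p a = permMul p.1 p.2 a := rfl

theorem permMulHom_injective : Function.Injective (permMulHom (α := α)) := by
  classical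
  refine (injective_iff_map_eq_one _).2 fun ⟨σ, τ⟩ h => ?_
  have hfix (a : α) : σ a = a ∧ τ a = a := by
    have := congrArg (fun f => f (single a a) (σ a)) h
    simp only [permMulHom_apply, permMul_single, Perm.coe_one, id] at this
    exact (mem_single_iff _ _ _ _).1 (this ▸ single_apply _ _)
  ext a <;> simp [hfix]

theorem permMul_sandwich {e : α ≃. α} {σ τ : Perm α}
    (he : τ.toPEquiv.trans e = e.trans σ.toPEquiv) (x y : α ≃. α) :
    permMul σ τ ((x.trans e).trans y) = ((permMul σ τ x).trans e).trans (permMul σ τ y) := by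
  simp only [permMul, trans_assoc]
  rw [← trans_assoc τ.toPEquiv e, he, trans_assoc, ← trans_assoc σ.toPEquiv, ← toPEquiv_trans,
    Equiv.self_trans_symm, toPEquiv_refl, refl_trans]

end PEquiv

namespace Equiv.Perm

variable {α : Type*}

def subtypeCongrPairHom (p : α → Prop) [DecidablePred p] :
    Perm {x // p x} × Perm {x // ¬ p x} × Perm {x // ¬ p x} →* Perm α × Perm α where
  toFun q := (subtypeCongrHom p (q.1, q.2.1), subtypeCongrHom p (q.1, q.2.2))
  map_one' := Prod.ext (map_one _) (map_one _)
  map_mul' q r := Prod.ext (map_mul (subtypeCongrHom p) (q.1, q.2.1) (r.1, r.2.1))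
    (map_mul (subtypeCongrHom p) (q.1, q.2.2) (r.1, r.2.2))

theorem subtypeCongrPairHom_injective (p : α → Prop) [DecidablePred p] :
    Function.Injective (subtypeCongrPairHom p) := by
  intro q r h
  obtain ⟨hg, hh₁⟩ := Prod.mk_inj.1 (subtypeCongrHom_injective p (congrArg Prod.fst h))
  obtain ⟨-, hh₂⟩ := Prod.mk_inj.1 (subtypeCongrHom_injective p (congrArg Prod.snd h))
  exact Prod.ext hg (Prod.ext hh₁ hh₂)

theorem subtypeCongr_toPEquiv_trans_ofSet {p : α → Prop} [DecidablePred p]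
    (g : Perm {x // p x}) (h h' : Perm {x // ¬ p x}) :
    (g.subtypeCongr h).toPEquiv.trans (PEquiv.ofSet {x | p x}) =
      (PEquiv.ofSet {x | p x}).trans (g.subtypeCongr h').toPEquiv := by
  refine PEquiv.ext fun t => ?_
  by_cases ht : p t
  · simp [PEquiv.trans, PEquiv.ofSet, ht, subtypeCongr.left_apply _ _ ht, (g _).property]
  · simp [PEquiv.trans, PEquiv.ofSet, ht, subtypeCongr.right_apply _ _ ht, (h _).property]

end Equiv.Perm

theorem sandE_eq_ofSet (n k : ℕ) : sandE n k = PEquiv.ofSet {i : Fin n | (i : ℕ) < k} := by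
  refine PEquiv.ext fun i => ?_
  simp [sandE, PEquiv.ofSet]

theorem tauMap_smul {n k : ℕ} (g : Perm {x : Fin n // (x : ℕ) < k})
    (h₁ h₂ : Perm {x : Fin n // ¬ (x : ℕ) < k}) (x y : IS n) :
    tauMap k g h₁ h₂ (smul n k x y) = smul n k (tauMap k g h₁ h₂ x) (tauMap k g h₁ h₂ y) := by
  rw [smul, smul, sandE_eq_ofSet]
  exact PEquiv.permMul_sandwich (Perm.subtypeCongr_toPEquiv_trans_ofSet g h₂ h₁) x y

theorem tau_monomorphism_general (n k : ℕ) :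
    (∀ (g : Perm {x : Fin n // (x : ℕ) < k})
       (h₁ h₂ : Perm {x : Fin n // ¬ (x : ℕ) < k}),
      Function.Bijective (tauMap k g h₁ h₂) ∧
      ∀ x y : IS n, tauMap k g h₁ h₂ (smul n k x y) =
        smul n k (tauMap k g h₁ h₂ x) (tauMap k g h₁ h₂ y)) ∧
    ∃ Φ : (Perm {x : Fin n // (x : ℕ) < k} × Perm {x : Fin n // ¬ (x : ℕ) < k} ×
            Perm {x : Fin n // ¬ (x : ℕ) < k}) →* Equiv.Perm (IS n),
      Function.Injective Φ ∧
      ∀ (g : Perm {x : Fin n // (x : ℕ) < k})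
        (h₁ h₂ : Perm {x : Fin n // ¬ (x : ℕ) < k}) (a : IS n),
          Φ (g, h₁, h₂) a = tauMap k g h₁ h₂ a :=
  ⟨fun g h₁ h₂ =>
      ⟨(PEquiv.permMulHom (bowtie k g h₁, bowtie k g h₂)).bijective, tauMap_smul g h₁ h₂⟩,
    PEquiv.permMulHom.comp (Perm.subtypeCongrPairHom _),
    PEquiv.permMulHom_injective.comp (Perm.subtypeCongrPairHom_injective _),
    fun _ _ _ _ => rfl⟩

/-- each `τ_(g,h₁,h₂)` is an automorphism of `(IS_n, *)`, and
`(g,h₁,h₂) ↦ τ_(g,h₁,h₂)` is an injective group homomorphism from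
`S(A) × S(Ā) × S(Ā)` into `Aut(IS_n, *)`. -/
theorem tau_monomorphism (n k : ℕ) (hk : 1 ≤ k) (hkn : k ≤ n) :
    (∀ (g : Perm {x : Fin n // (x : ℕ) < k})
       (h₁ h₂ : Perm {x : Fin n // ¬ (x : ℕ) < k}),
      Function.Bijective (tauMap k g h₁ h₂) ∧
      ∀ x y : IS n, tauMap k g h₁ h₂ (smul n k x y) =
        smul n k (tauMap k g h₁ h₂ x) (tauMap k g h₁ h₂ y)) ∧
    ∃ Φ : (Perm {x : Fin n // (x : ℕ) < k} × Perm {x : Fin n // ¬ (x : ℕ) < k} ×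
            Perm {x : Fin n // ¬ (x : ℕ) < k}) →* Equiv.Perm (IS n),
      Function.Injective Φ ∧
      ∀ (g : Perm {x : Fin n // (x : ℕ) < k})
        (h₁ h₂ : Perm {x : Fin n // ¬ (x : ℕ) < k}) (a : IS n),
          Φ (g, h₁, h₂) a = tauMap k g h₁ h₂ a :=
  tau_monomorphism_general n k
end

section
/- If π is a semigroup automorphism of (IS_n, *) and a ∈ IS_n is decomposable (i.e. a = b * c for some b, c), then rank(π(a)) = rank(a). -/
open Equiv

/-! The rank of an idempotent `g` of `(IS_n, *)` is visible in the semigroup structure: the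
idempotents are the partial identities `1_s` with `s ⊆ A`, and the idempotents `h` below `1_s`
(`h * h = h`, `h * 1_s = h`) are the `1_t` with `t ⊆ s`, so there are `2 ^ rank g` of them, a
number every automorphism preserves. A decomposable `a = b * c` equals `b * (1_D * c)` for
`D = im b ∩ A ∩ dom c`, and `1_D = b⁻¹ a c⁻¹`, so `rank 1_D ≤ rank a`. Hence
`rank π(a) ≤ rank π(1_D) = rank 1_D ≤ rank a`, and `π⁻¹` gives the reverse inequality. -/

section IdempotentsBelow

variable {α : Type*}

def idempotentsBelow (op : α → α → α) (g : α) : Set α := {h | op h h = h ∧ op h g = h}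

variable {op : α → α → α}

theorem symm_apply_op {π : α ≃ α} (hπ : ∀ x y, π (op x y) = op (π x) (π y)) (x y : α) :
    π.symm (op x y) = op (π.symm x) (π.symm y) :=
  π.injective (by rw [hπ, π.apply_symm_apply, π.apply_symm_apply, π.apply_symm_apply])

theorem idempotentsBelow_apply {π : α ≃ α} (hπ : ∀ x y, π (op x y) = op (π x) (π y)) (g : α) :
    idempotentsBelow op (π g) = π '' idempotentsBelow op g := by
  ext h
  rw [π.image_eq_preimage_symm, Set.mem_preimage]
  conv_rhs => rw [← π.symm_apply_apply g]
  simp only [idempotentsBelow, Set.mem_ofPred_eq, ← symm_apply_op hπ, π.symm.injective.eq_iff]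

theorem ncard_idempotentsBelow_apply {π : α ≃ α} (hπ : ∀ x y, π (op x y) = op (π x) (π y))
    (g : α) : (idempotentsBelow op (π g)).ncard = (idempotentsBelow op g).ncard := by
  rw [idempotentsBelow_apply hπ, Set.ncard_image_of_injective _ π.injective]

end IdempotentsBelow

namespace PEquiv

variable {α β : Type*}

theorem eq_of_apply_eq_some {f : α ≃. β} {a a' : α} {b : β} (h : f a = some b)
    (h' : f a' = some b) : a = a' :=
  f.inj h h'

theorem ofSet_trans_ofSet (s t : Set α) [DecidablePred (· ∈ s)] [DecidablePred (· ∈ t)]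
    [DecidablePred (· ∈ s ∩ t)] : (ofSet s).trans (ofSet t) = ofSet (s ∩ t) := by
  ext a b
  simp only [trans_eq_some, ofSet_eq_some_iff, Set.mem_inter_iff]
  grind

-- Implicit decidability arguments: the two sides are often elaborated with different instances.
theorem ofSet_inj {s t : Set α} {_ : DecidablePred (· ∈ s)} {_ : DecidablePred (· ∈ t)} :
    ofSet s = ofSet t ↔ s = t := by
  refine ⟨fun h => Set.ext fun a => ?_, fun h => by subst h; congr⟩
  rw [← ofSet_eq_some_self_iff, h, ofSet_eq_some_self_iff]

end PEquiv

open PEquiv Classical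

variable {n k : ℕ}

section Rank

theorem mem_sim {x : IS n} {b : Fin n} : b ∈ sim x ↔ (x.symm b).isSome := Iff.rfl

theorem mem_sdom {x : IS n} {a : Fin n} : a ∈ sdom x ↔ (x a).isSome := Iff.rfl

theorem mem_sim_of_eq_some {x : IS n} {a b : Fin n} (h : x a = some b) : b ∈ sim x := by
  simp [mem_sim, (eq_some_iff x).2 h]

theorem mem_sdom_of_eq_some {x : IS n} {a b : Fin n} (h : x a = some b) : a ∈ sdom x := by
  simp [mem_sdom, h]

theorem sim_symm (x : IS n) : sim x.symm = sdom x := rfl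

theorem srank_eq_ncard (x : IS n) : srank x = (sim x).ncard :=
  Nat.card_coe_set_eq _

theorem srank_symm (x : IS n) : srank x.symm = srank x := by
  rw [srank_eq_ncard, srank_eq_ncard, sim_symm]
  refine Set.ncard_congr (fun a ha => (x a).get ha) (fun a ha => ?_) (fun a a' ha ha' h => ?_)
    (fun b hb => ⟨(x.symm b).get hb, ?_, ?_⟩)
  · simp [mem_sim, (eq_some_iff x).2 (Option.some_get ha).symm]
  · exact eq_of_apply_eq_some (Option.eq_some_of_isSome ha) (h ▸ Option.eq_some_of_isSome ha')
  · simp [mem_sdom, (eq_some_iff x).1 (Option.some_get hb).symm]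
  · simp [(eq_some_iff x).1 (Option.some_get hb).symm]

theorem srank_trans_le_right (x y : IS n) : srank (x.trans y) ≤ srank y := by
  rw [srank_eq_ncard, srank_eq_ncard]
  refine Set.ncard_le_ncard fun b hb => ?_
  rw [mem_sim, symm_trans_rev, Option.isSome_iff_exists] at hb
  obtain ⟨a, ha⟩ := hb
  obtain ⟨c, hc, -⟩ := (trans_eq_some _ _ _ _).1 ha
  simp [mem_sim, hc]

theorem srank_trans_le_left (x y : IS n) : srank (x.trans y) ≤ srank x := by
  rw [← srank_symm, symm_trans_rev, ← srank_symm x]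
  exact srank_trans_le_right _ _

theorem srank_ofSet (s : Set (Fin n)) [DecidablePred (· ∈ s)] : srank (ofSet s) = s.ncard := by
  rw [srank_eq_ncard]
  congr
  ext b
  simp [mem_sim, ofSet_symm, Option.isSome_iff_exists]

theorem srank_smul_smul_le (u g v : IS n) : srank (smul n k u (smul n k g v)) ≤ srank g :=
  calc srank (smul n k u (smul n k g v))
      = srank (((u.trans (sandE n k)).trans g).trans ((sandE n k).trans v)) := by
        simp only [smul, PEquiv.trans_assoc]
    _ ≤ srank ((u.trans (sandE n k)).trans g) := srank_trans_le_left _ _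
    _ ≤ srank g := srank_trans_le_right _ _

end Rank

section Idempotents

theorem sandE_eq_ofSet_s9 : sandE n k = ofSet (SetA n k) := by
  ext i j
  simp only [sandE, coe_mk_apply, ofSet_eq_some_iff]
  split_ifs <;> grind [SetA]

theorem smul_ofSet_ofSet (s t : Set (Fin n)) :
    smul n k (ofSet s) (ofSet t) = ofSet (s ∩ SetA n k ∩ t) := by
  rw [smul, sandE_eq_ofSet_s9, ofSet_trans_ofSet, ofSet_trans_ofSet]

theorem eq_and_mem_setA_of_smul_self {g : IS n} (hg : smul n k g g = g) {a b : Fin n}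
    (hab : g a = some b) : b = a ∧ b ∈ SetA n k := by
  have hgg : smul n k g g a = some b := by rwa [hg]
  simp only [smul, sandE_eq_ofSet_s9, trans_eq_some, ofSet_eq_some_iff, hab, Option.some.injEq]
    at hgg
  obtain ⟨_, ⟨_, rfl, rfl, hbA⟩, hbb⟩ := hgg
  exact ⟨eq_of_apply_eq_some hbb hab, hbA⟩

theorem sdom_subset_setA_of_smul_self {g : IS n} (hg : smul n k g g = g) :
    sdom g ⊆ SetA n k := fun a ha => by
  obtain ⟨b, hab⟩ := Option.isSome_iff_exists.1 ha
  obtain ⟨rfl, hbA⟩ := eq_and_mem_setA_of_smul_self hg hab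
  exact hbA

theorem eq_ofSet_sdom_of_smul_self {g : IS n} (hg : smul n k g g = g) : g = ofSet (sdom g) := by
  ext a b
  rw [ofSet_eq_some_iff, mem_sdom]
  constructor
  · intro hab
    obtain ⟨rfl, -⟩ := eq_and_mem_setA_of_smul_self hg hab
    simp [hab]
  · rintro ⟨rfl, hb⟩
    obtain ⟨c, hbc⟩ := Option.isSome_iff_exists.1 hb
    obtain ⟨rfl, -⟩ := eq_and_mem_setA_of_smul_self hg hbc
    exact hbc

theorem smul_self_eq_self_iff {g : IS n} :
    smul n k g g = g ↔ ∃ s ⊆ SetA n k, g = ofSet s := by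
  refine ⟨fun hg => ⟨sdom g, sdom_subset_setA_of_smul_self hg, eq_ofSet_sdom_of_smul_self hg⟩, ?_⟩
  rintro ⟨s, hs, rfl⟩
  rw [smul_ofSet_ofSet]
  exact ofSet_inj.2 (by rw [Set.inter_right_comm, Set.inter_self, Set.inter_eq_left.2 hs])

theorem idempotentsBelow_smul_ofSet {s : Set (Fin n)} (hs : s ⊆ SetA n k) :
    idempotentsBelow (smul n k) (ofSet s) = (fun t => ofSet t) '' 𝒫 s := by
  ext h
  simp only [idempotentsBelow, Set.mem_ofPred_eq, smul_self_eq_self_iff, Set.mem_image,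
    Set.mem_powerset_iff]
  constructor
  · rintro ⟨⟨t, -, rfl⟩, hts⟩
    rw [smul_ofSet_ofSet, ofSet_inj] at hts
    exact ⟨t, hts.symm.subset.trans Set.inter_subset_right, rfl⟩
  · rintro ⟨t, hts, rfl⟩
    refine ⟨⟨t, hts.trans hs, rfl⟩, ?_⟩
    rw [smul_ofSet_ofSet]
    exact ofSet_inj.2 (by rw [Set.inter_eq_left.2 (hts.trans hs), Set.inter_eq_left.2 hts])

theorem ncard_idempotentsBelow_smul {g : IS n} (hg : smul n k g g = g) :
    (idempotentsBelow (smul n k) g).ncard = 2 ^ srank g := by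
  obtain ⟨s, hs, rfl⟩ := smul_self_eq_self_iff.1 hg
  rw [idempotentsBelow_smul_ofSet hs, Set.ncard_image_of_injective _ fun _ _ => ofSet_inj.1,
    Set.ncard_powerset, srank_ofSet]

theorem srank_apply_of_smul_self {π : Perm (IS n)}
    (hπ : ∀ x y, π (smul n k x y) = smul n k (π x) (π y)) {g : IS n} (hg : smul n k g g = g) :
    srank (π g) = srank g := by
  have hπg : smul n k (π g) (π g) = π g := by rw [← hπ, hg]
  apply Nat.pow_right_injective le_rfl
  simp only [← ncard_idempotentsBelow_smul hg, ← ncard_idempotentsBelow_smul hπg,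
    ncard_idempotentsBelow_apply hπ]

end Idempotents

section Factorization

theorem smul_smul_ofSet_eq (b c : IS n) :
    smul n k b (smul n k (ofSet (sim b ∩ SetA n k ∩ sdom c)) c) = smul n k b c := by
  ext t u
  simp only [smul, sandE_eq_ofSet_s9, trans_eq_some, ofSet_eq_some_iff, Set.mem_inter_iff]
  grind [mem_sim_of_eq_some, mem_sdom_of_eq_some]

theorem symm_trans_smul_trans_symm (b c : IS n) :
    b.symm.trans ((smul n k b c).trans c.symm) = ofSet (sim b ∩ SetA n k ∩ sdom c) := by
  ext t u
  simp only [smul, sandE_eq_ofSet_s9, trans_eq_some, ofSet_eq_some_iff, Set.mem_inter_iff, mem_sim,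
    mem_sdom, Option.isSome_iff_exists, eq_some_iff]
  grind [eq_of_apply_eq_some]

theorem exists_smul_idempotent_factor (b c : IS n) :
    ∃ g u v : IS n, smul n k g g = g ∧ srank g ≤ srank (smul n k b c) ∧
      smul n k u (smul n k g v) = smul n k b c := by
  refine ⟨ofSet (sim b ∩ SetA n k ∩ sdom c), b, c,
    smul_self_eq_self_iff.2 ⟨_, Set.inter_subset_left.trans Set.inter_subset_right,
      ofSet_inj.2 rfl⟩, ?_,
    smul_smul_ofSet_eq b c⟩
  rw [← symm_trans_smul_trans_symm]
  exact (srank_trans_le_right _ _).trans (srank_trans_le_left _ _)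

end Factorization

theorem srank_apply_smul_le {π : Perm (IS n)}
    (hπ : ∀ x y, π (smul n k x y) = smul n k (π x) (π y)) (b c : IS n) :
    srank (π (smul n k b c)) ≤ srank (smul n k b c) := by
  obtain ⟨g, u, v, hg, hgbc, hfac⟩ := exists_smul_idempotent_factor b c
  calc srank (π (smul n k b c)) = srank (smul n k (π u) (smul n k (π g) (π v))) := by
        rw [← hfac, hπ, hπ]
    _ ≤ srank (π g) := srank_smul_smul_le _ _ _
    _ = srank g := srank_apply_of_smul_self hπ hg
    _ ≤ srank (smul n k b c) := hgbc

theorem aut_preserves_rank_of_decomposable_general (n k : ℕ)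
    (π : Equiv.Perm (IS n))
    (hπ : ∀ x y : IS n, π (smul n k x y) = smul n k (π x) (π y))
    (a : IS n) (ha : ∃ b c : IS n, smul n k b c = a) :
    srank (π a) = srank a := by
  obtain ⟨b, c, rfl⟩ := ha
  refine le_antisymm (srank_apply_smul_le hπ b c) ?_
  simpa only [← hπ, Equiv.symm_apply_apply] using
    srank_apply_smul_le (symm_apply_op hπ) (π b) (π c)

/-- automorphisms of `(IS_n, *)` preserve the rank of decomposable
elements. -/
theorem aut_preserves_rank_of_decomposable (n k : ℕ) (hk : 1 ≤ k) (hkn : k ≤ n)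
    (π : Equiv.Perm (IS n))
    (hπ : ∀ x y : IS n, π (smul n k x y) = smul n k (π x) (π y))
    (a : IS n) (ha : ∃ b c : IS n, smul n k b c = a) :
    srank (π a) = srank a :=
  aut_preserves_rank_of_decomposable_general n k π hπ a ha
end
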